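/- Fix an integer r ≥ 1, let Z be an r×r integer matrix indexed by ZMod r with trace(S^i · Z) = 0 for all i ∈ ZMod r, and let y : ZMod r → ℤ. Define the matrix Y by Y i j = ( Σ_{k=1}^{j.val} Z (i − j − 1 + k) k ) + y (i − j), where k runs over the natural numbers 1, …, j.val cast into ZMod r and all index arithmetic is performed in ZMod r. Then S·Y − Y·S = Z and Y i 0 = y i for all i ∈ ZMod r; that is, Y is the unique solution with prescribed first column y. -/

import Mathlib

/-!
The `(i, j)` entry of `S * Y - Y * S` is `Y (i + 1) j - Y i (j - 1)`. Both entries carry the same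
`y`-term, and their sums run along the same diagonal `k ↦ Z (i - j + k) k` of `Z`, with lengths
`j.val` and `(j - 1).val`. For `j ≠ 0` these differ by one, and the extra term is `Z i j`. For
`j = 0` the index wraps around: the first sum is empty and the second is the whole diagonal
except `Z i 0`; the whole diagonal sums to `trace (S^i * Z) = 0`.
-/

/-- The matrix `S^t` for `t ∈ ZMod r`: `(S^t) i j = 1` if `i = j − t` and `0` otherwise. -/
def Smat (r : ℕ) (t : ZMod r) : Matrix (ZMod r) (ZMod r) ℤ :=
  Matrix.of fun i j => if i = j - t then 1 else 0

open Finset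

theorem ZMod.sum_range_natCast {r : ℕ} [NeZero r] {M : Type*} [AddCommMonoid M]
    (f : ZMod r → M) : ∑ k ∈ range r, f k = ∑ x, f x :=
  sum_nbij' (↑) (fun x => x.val) (by simp) (fun x _ => by simpa using x.val_lt)
    (fun k hk => by simp [ZMod.val_cast_of_lt (mem_range.mp hk)]) (by simp) (by simp)

theorem ZMod.add_sum_Icc_one_val_neg_one {r : ℕ} [NeZero r] {M : Type*} [AddCommMonoid M]
    (f : ZMod r → M) : f 0 + ∑ k ∈ Icc 1 (-1 : ZMod r).val, f k = ∑ x, f x := by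
  obtain ⟨m, rfl⟩ : ∃ m, r = m + 1 := Nat.exists_eq_succ_of_ne_zero (NeZero.ne r)
  rw [ZMod.val_neg_one, ← ZMod.sum_range_natCast, sum_range_succ', ← Ico_add_one_right_eq_Icc,
    sum_Ico_eq_sum_range, Nat.add_sub_cancel, add_comm]
  simp [add_comm]

theorem ZMod.sum_Icc_one_val_of_ne_zero {r : ℕ} [NeZero r] {M : Type*} [AddCommMonoid M]
    (f : ZMod r → M) {j : ZMod r} (hj : j ≠ 0) :
    ∑ k ∈ Icc 1 j.val, f k = ∑ k ∈ Icc 1 (j - 1).val, f k + f j := by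
  have hpos : 0 < j.val := ZMod.val_pos.mpr hj
  have hval : (j - 1).val + 1 = j.val := by
    have : j - 1 = ((j.val - 1 : ℕ) : ZMod r) := by
      rw [Nat.cast_sub hpos, Nat.cast_one, ZMod.natCast_zmod_val]
    rw [this, ZMod.val_cast_of_lt (by have := j.val_lt; omega)]
    omega
  rw [← hval, sum_Icc_succ_top (by omega), hval, ZMod.natCast_zmod_val]

section
variable {r : ℕ} [NeZero r]

theorem Smat_mul_apply (t : ZMod r) (A : Matrix (ZMod r) (ZMod r) ℤ) (i j : ZMod r) :
    (Smat r t * A) i j = A (i + t) j := by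
  simp [Smat, Matrix.mul_apply, eq_sub_iff_add_eq, eq_comm]

theorem mul_Smat_apply (t : ZMod r) (A : Matrix (ZMod r) (ZMod r) ℤ) (i j : ZMod r) :
    (A * Smat r t) i j = A i (j - t) := by
  simp [Smat, Matrix.mul_apply]

theorem trace_Smat_mul (t : ZMod r) (A : Matrix (ZMod r) (ZMod r) ℤ) :
    (Smat r t * A).trace = ∑ j, A (j + t) j := by
  simp only [Matrix.trace, Matrix.diag, Smat_mul_apply]

end

theorem stmt_10 (r : ℕ) [NeZero r] (Z : Matrix (ZMod r) (ZMod r) ℤ)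
    (hZ : ∀ i : ZMod r, Matrix.trace (Smat r i * Z) = 0) (y : ZMod r → ℤ)
    (Y : Matrix (ZMod r) (ZMod r) ℤ)
    (hYdef : ∀ i j : ZMod r,
      Y i j = (∑ k ∈ Finset.Icc 1 j.val, Z (i - j - 1 + (k : ZMod r)) ((k : ZMod r)))
        + y (i - j)) :
    Smat r 1 * Y - Y * Smat r 1 = Z ∧ ∀ i : ZMod r, Y i 0 = y i := by
  refine ⟨?_, fun i => by simp [hYdef]⟩
  ext i j
  set g : ZMod r → ℤ := fun k => Z (i - j + k) k
  have hi : i + 1 - j - 1 = i - j := by ring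
  have hY_up : Y (i + 1) j = ∑ k ∈ Icc 1 j.val, g k + y (i + 1 - j) := by
    rw [hYdef, hi]
  have hY_left : Y i (j - 1) = ∑ k ∈ Icc 1 (j - 1).val, g k + y (i + 1 - j) := by
    rw [hYdef, sub_sub_eq_add_sub, hi]
  rw [Matrix.sub_apply, Smat_mul_apply, mul_Smat_apply, hY_up, hY_left]
  rcases eq_or_ne j 0 with rfl | hj
  · have hg : g 0 + ∑ k ∈ Icc 1 (-1 : ZMod r).val, g k = 0 := by
      rw [ZMod.add_sum_Icc_one_val_neg_one, ← hZ i, trace_Smat_mul]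
      simp only [g, sub_zero, add_comm]
    have hg0 : g 0 = Z i 0 := by simp [g]
    simp only [ZMod.val_zero, Icc_eq_empty_of_lt zero_lt_one, sum_empty, zero_sub]
    linarith
  · rw [ZMod.sum_Icc_one_val_of_ne_zero g hj]
    simp [g]
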